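/- Let F be a differential field of characteristic zero and let E be an iterated antiderivative extension of F. Then E is a purely transcendental extension of F, and E admits a transcendence base over F consisting of iterated antiderivatives of F. -/

import Mathlib

/-- A derivation on a field: an additive map satisfying the Leibniz rule. -/
def IsDeriv {E : Type*} [Field E] (D : E → E) : Prop :=
  (∀ x y : E, D (x + y) = D x + D y) ∧ ∀ x y : E, D (x * y) = D x * y + x * D y

/-- A subfield closed under the derivation, i.e. a differential subfield. -/
def IsDiffSubfield {E : Type*} [Field E] (D : E → E) (K : Subfield E) : Prop :=
  ∀ x ∈ K, D x ∈ K

/-- The subfield generated by a subfield `F` together with a set `S`, i.e. `F(S)`. -/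
def adjoinSF {E : Type*} [Field E] (F : Subfield E) (S : Set E) : Subfield E :=
  Subfield.closure (↑F ∪ S)

/-- `ζ 0, …, ζ (n-1)` are iterated antiderivatives of `F`:
`(ζ i)' ∈ F(ζ 0, …, ζ (i-1))` for every `i`. -/
def IsIterAntideriv {E : Type*} [Field E] (D : E → E) (F : Subfield E) {n : ℕ}
    (ζ : Fin n → E) : Prop :=
  ∀ i, D (ζ i) ∈ adjoinSF F (ζ '' {j | j < i})

/-- `M` is a no new constants extension of `K`: the constants of `M` are exactly
the constants of `K`. -/
def NoNewConstants {E : Type*} [Field E] (D : E → E) (K M : Subfield E) : Prop :=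
  K ≤ M ∧ ∀ x ∈ M, D x = 0 → x ∈ K

/-- `K` is an iterated antiderivative extension of `F`. -/
def IsIAE {E : Type*} [Field E] (D : E → E) (F K : Subfield E) : Prop :=
  NoNewConstants D F K ∧
    ∃ (n : ℕ) (ζ : Fin n → E), IsIterAntideriv D F ζ ∧ K = adjoinSF F (Set.range ζ)

/-- `K` is an antiderivative extension of `F`. -/
def IsAE {E : Type*} [Field E] (D : E → E) (F K : Subfield E) : Prop :=
  NoNewConstants D F K ∧
    ∃ (n : ℕ) (ζ : Fin n → E), (∀ i, D (ζ i) ∈ (F : Set E)) ∧ K = adjoinSF F (Set.range ζ)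

/-- A differential automorphism of `E` over `F`: a field automorphism fixing `F`
pointwise and commuting with the derivation. -/
def IsDiffAut {E : Type*} [Field E] (D : E → E) (F : Subfield E) (σ : E ≃+* E) : Prop :=
  (∀ x ∈ F, σ x = x) ∧ ∀ y : E, σ (D y) = D (σ y)

/-- `M` is a minimal differential field extension of `K`. -/
def IsMinimalDiffExt {E : Type*} [Field E] (D : E → E) (K M : Subfield E) : Prop :=
  IsDiffSubfield D M ∧ K < M ∧
    ∀ L : Subfield E, IsDiffSubfield D L → K ≤ L → L ≤ M → L = K ∨ L = M

/-- The field of constants of a differential subfield `F`. -/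
def constantsOf {E : Type*} [Field E] (D : E → E) (hD : IsDeriv D) (F : Subfield E) :
    Subfield E where
  carrier := {x : E | x ∈ F ∧ D x = 0}
  zero_mem' := by
    refine ⟨F.zero_mem, ?_⟩
    have h := hD.1 0 0
    simp only [add_zero] at h
    exact left_eq_add.mp h
  one_mem' := by
    refine ⟨F.one_mem, ?_⟩
    have h := hD.2 1 1
    simp only [mul_one, one_mul] at h
    exact left_eq_add.mp h
  add_mem' := by
    rintro a b ⟨haF, ha⟩ ⟨hbF, hb⟩
    exact ⟨F.add_mem haF hbF, by rw [hD.1 a b, ha, hb, add_zero]⟩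
  mul_mem' := by
    rintro a b ⟨haF, ha⟩ ⟨hbF, hb⟩
    exact ⟨F.mul_mem haF hbF, by rw [hD.2 a b, ha, hb, zero_mul, mul_zero, add_zero]⟩
  neg_mem' := by
    rintro a ⟨haF, ha⟩
    refine ⟨F.neg_mem haF, ?_⟩
    have h0 : D 0 = 0 := by
      have h := hD.1 0 0
      simp only [add_zero] at h
      exact left_eq_add.mp h
    have h := hD.1 a (-a)
    rw [add_neg_cancel, h0, ha, zero_add] at h
    exact h.symm
  inv_mem' := by
    rintro a ⟨haF, ha⟩
    refine ⟨F.inv_mem haF, ?_⟩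
    by_cases h0 : a = 0
    · subst h0; rw [inv_zero]; exact ha
    · have h1 : D 1 = 0 := by
        have h := hD.2 1 1
        simp only [mul_one, one_mul] at h
        exact left_eq_add.mp h
      have h := hD.2 a a⁻¹
      rw [mul_inv_cancel₀ h0, h1, ha, zero_mul, zero_add] at h
      rcases mul_eq_zero.mp h.symm with h' | h'
      · exact absurd h' h0
      · exact h'

/-- The antiderivative closure of `L` in `E`: the subfield generated over `L`
by all antiderivatives of `L` lying in `E`. -/
def adCl {E : Type*} [Field E] (D : E → E) (L : Subfield E) : Subfield E :=
  adjoinSF L {x : E | D x ∈ L}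

/-- The differential subfield generated by `F` and `u`, i.e. `F⟨u⟩ = F(u, u', u'', …)`. -/
def diffAdjoin {E : Type*} [Field E] (D : E → E) (F : Subfield E) (u : E) : Subfield E :=
  sInf {M : Subfield E | IsDiffSubfield D M ∧ F ≤ M ∧ u ∈ M}

/-- The transcendence degree of `K` over `F` (both viewed inside an ambient field `E`):
the supremum of cardinalities of subsets of `K` that are algebraically independent
over `F`. -/
noncomputable def trdegSF {E : Type*} [Field E] (F K : Subfield E) : Cardinal :=
  ⨆ s : {s : Set E // s ⊆ (K : Set E) ∧ AlgebraicIndependent F ((↑) : s → E)},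
    Cardinal.mk s.1

/-! If `ζ' ∈ K` for a differential field `K` containing all constants and `ζ` is algebraic over
`K`, then `ζ ∈ K`: differentiating the minimal polynomial `X ^ m + b X ^ (m - 1) + ⋯` of `ζ` gives
a relation of lower degree, which must vanish, so `(m ζ + b)' = 0` and `m ζ + b ∈ K`. Adjoining
the iterated antiderivatives one at a time, each new one therefore either already lies in the
field generated so far or is transcendental over it; the transcendental ones form the basis. -/

open Polynomial
open scoped Differential

section Adjoin

variable {E : Type*} [Field E] {F : Subfield E} {S : Set E}

variable (F S) in
theorem le_adjoinSF : F ≤ adjoinSF F S :=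
  fun _ hx => Subfield.subset_closure (Or.inl hx)

variable (F S) in
theorem subset_adjoinSF : S ⊆ adjoinSF F S :=
  fun _ hx => Subfield.subset_closure (Or.inr hx)

theorem adjoinSF_le {K : Subfield E} (hF : F ≤ K) (hS : S ⊆ K) : adjoinSF F S ≤ K :=
  Subfield.closure_le.2 (Set.union_subset hF hS)

theorem adjoinSF_eq_self (h : S ⊆ F) : adjoinSF F S = F :=
  le_antisymm (adjoinSF_le le_rfl h) (le_adjoinSF F S)

theorem adjoinSF_insert (z : E) : adjoinSF F (insert z S) = adjoinSF (adjoinSF F S) {z} := by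
  apply le_antisymm
  · refine adjoinSF_le ((le_adjoinSF F S).trans (le_adjoinSF _ _))
      (Set.insert_subset (subset_adjoinSF _ _ rfl) ?_)
    exact (subset_adjoinSF F S).trans (le_adjoinSF _ _)
  · refine adjoinSF_le (adjoinSF_le (le_adjoinSF _ _) ?_) ?_
    · exact (Set.subset_insert z S).trans (subset_adjoinSF _ _)
    · exact Set.singleton_subset_iff.2 (subset_adjoinSF _ _ (Set.mem_insert z S))

variable (F S) in
theorem adjoinSF_eq_toSubfield_adjoin :
    adjoinSF F S = (IntermediateField.adjoin F S).toSubfield := by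
  rw [IntermediateField.adjoin_toSubfield, adjoinSF]
  congr 2
  exact Subtype.range_val.symm

theorem isAlgebraic_adjoin_of_adjoinSF_eq_top (h : adjoinSF F S = ⊤) :
    Algebra.IsAlgebraic (Algebra.adjoin F S) E := by
  rw [← IntermediateField.isAlgebraic_adjoin_iff_top]
  rw [adjoinSF_eq_toSubfield_adjoin] at h
  exact ⟨fun x => isAlgebraic_algebraMap
    (⟨x, show x ∈ (IntermediateField.adjoin F S).toSubfield from h ▸ trivial⟩ :
      IntermediateField.adjoin F S)⟩

end Adjoin

section Derivation

variable {E : Type*} [Field E] {D : E → E}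

def IsDeriv.toDerivation (hD : IsDeriv D) : Derivation ℤ E E :=
  Derivation.mk' (AddMonoidHom.mk' D hD.1).toIntLinearMap fun a b => by
    simp [hD.2 a b, add_comm, mul_comm]

def IsDeriv.restrict (hD : IsDeriv D) {K : Subfield E} (hK : IsDiffSubfield D K) :
    Derivation ℤ K K :=
  Derivation.mk' (AddMonoidHom.mk' (fun x : K => (⟨D x, hK x x.2⟩ : K))
    fun x y => Subtype.ext (hD.1 x y)).toIntLinearMap fun a b => Subtype.ext <| by
      simp [hD.2 a b, add_comm, mul_comm]

theorem isDiffSubfield_closure (hD : IsDeriv D) {S : Set E}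
    (hS : ∀ x ∈ S, D x ∈ Subfield.closure S) : IsDiffSubfield D (Subfield.closure S) := by
  let d := hD.toDerivation
  change ∀ x ∈ Subfield.closure S, d x ∈ Subfield.closure S
  intro x hx
  induction hx using Subfield.closure_induction with
  | mem x hx => exact hS x hx
  | one => rw [d.map_one_eq_zero]; exact zero_mem _
  | add x y _ _ hx hy => rw [d.map_add]; exact add_mem hx hy
  | neg x _ hx => rw [d.map_neg]; exact neg_mem hx
  | inv x hxS hx =>
    rw [d.leibniz_inv, smul_eq_mul]
    exact mul_mem (neg_mem (pow_mem (inv_mem hxS) 2)) hx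
  | mul x y hxS hyS hx hy =>
    rw [d.leibniz, smul_eq_mul, smul_eq_mul]
    exact add_mem (mul_mem hxS hy) (mul_mem hyS hx)

theorem IsDiffSubfield.deriv_coeff_minpoly (hD : IsDeriv D) {K : Subfield E}
    (hK : IsDiffSubfield D K) {ζ : E} (hζ : D ζ ∈ K) (halg : IsAlgebraic K ζ) {n : ℕ}
    (hn : (minpoly K ζ).natDegree = n + 1) : D ((minpoly K ζ).coeff n) + D ζ * (n + 1) = 0 := by
  let _ : Differential E := ⟨hD.toDerivation⟩
  let _ : Differential K := ⟨hD.restrict hK⟩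
  have : DifferentialAlgebra K E := ⟨fun _ => rfl⟩
  set p := minpoly K ζ
  have hp : p.Monic := minpoly.monic halg.isIntegral
  set q := Differential.mapCoeffs p + (⟨D ζ, hζ⟩ : K) • derivative p
  have hq : aeval ζ q = 0 := by
    have h := Differential.deriv_aeval_eq ζ p
    rw [minpoly.aeval, map_zero] at h
    rw [map_add, map_smul, Algebra.smul_def, mul_comm]
    exact h.symm
  have hqdeg : q.degree < p.degree := by
    refine (degree_add_le _ _).trans_lt (max_lt ?_ ?_)
    · rw [degree_eq_natDegree hp.ne_zero, degree_lt_iff_coeff_zero]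
      intro m hm
      rw [Differential.coeff_mapCoeffs]
      rcases (show p.natDegree ≤ m by exact_mod_cast hm).eq_or_lt with hm | hm
      · rw [← hm, hp.coeff_natDegree, Derivation.map_one_eq_zero]
      · rw [coeff_eq_zero_of_natDegree_lt hm, map_zero]
    · exact (degree_smul_le _ _).trans_lt (degree_derivative_lt hp.ne_zero)
  have hq0 : q = 0 := eq_zero_of_dvd_of_degree_lt (minpoly.dvd K ζ hq) hqdeg
  have h := congrArg (fun r => ((r.coeff n : K) : E)) hq0
  simp only [q, coeff_add, Differential.coeff_mapCoeffs, coeff_smul, coeff_derivative, ← hn,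
    hp.coeff_natDegree, one_mul, smul_eq_mul, Subfield.coe_add, Subfield.coe_mul,
    SubringClass.coe_natCast, OneMemClass.coe_one, coeff_zero, ZeroMemClass.coe_zero] at h
  exact h

theorem IsDiffSubfield.mem_of_isAlgebraic_of_deriv_mem [CharZero E] (hD : IsDeriv D)
    {K : Subfield E} (hK : IsDiffSubfield D K) (hconst : ∀ x, D x = 0 → x ∈ K) {ζ : E}
    (hζ : D ζ ∈ K) (halg : IsAlgebraic K ζ) : ζ ∈ K := by
  obtain ⟨n, hn⟩ : ∃ n, (minpoly K ζ).natDegree = n + 1 :=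
    Nat.exists_eq_succ_of_ne_zero (minpoly.natDegree_pos halg.isIntegral).ne'
  set b : E := ↑((minpoly K ζ).coeff n)
  have hu : b + (n + 1) * ζ ∈ K := by
    refine hconst _ ?_
    change hD.toDerivation (b + (n + 1) * ζ) = 0
    simp only [map_add, Derivation.leibniz, Derivation.map_natCast, Derivation.map_one_eq_zero,
      smul_eq_mul, mul_zero, add_zero]
    change D b + (n + 1) * D ζ = 0
    linear_combination hK.deriv_coeff_minpoly hD hζ halg hn
  have hζ_eq : ζ = (b + (n + 1) * ζ - b) / (n + 1) := by
    field_simp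
    ring
  rw [hζ_eq]
  exact K.div_mem (K.sub_mem hu ((minpoly K ζ).coeff n).2)
    (K.add_mem (natCast_mem K n) K.one_mem)

end Derivation

section IterAntideriv

variable {E : Type*} [Field E] {D : E → E} {F : Subfield E}

theorem Fin.snoc_image_lt_castSucc {α : Type*} {n : ℕ} (η : Fin n → α) (z : α) (i : Fin n) :
    (Fin.snoc η z : Fin (n + 1) → α) '' {j | j < i.castSucc} = η '' {j | j < i} := by
  ext x
  simp [Fin.exists_fin_succ', (Fin.castSucc_lt_last i).not_gt]

theorem Fin.snoc_image_lt_last {α : Type*} {n : ℕ} (η : Fin n → α) (z : α) :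
    (Fin.snoc η z : Fin (n + 1) → α) '' {j | j < Fin.last n} = Set.range η := by
  ext x
  simp [Fin.exists_fin_succ']

theorem isIterAntideriv_snoc {n : ℕ} {η : Fin n → E} {z : E} :
    IsIterAntideriv D F (Fin.snoc η z : Fin (n + 1) → E) ↔
      IsIterAntideriv D F η ∧ D z ∈ adjoinSF F (Set.range η) := by
  simp only [IsIterAntideriv, Fin.forall_fin_succ', Fin.snoc_castSucc, Fin.snoc_last,
    Fin.snoc_image_lt_castSucc, Fin.snoc_image_lt_last]

theorem IsIterAntideriv.isDiffSubfield_adjoinSF (hD : IsDeriv D) (hF : IsDiffSubfield D F)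
    {n : ℕ} {η : Fin n → E} (hη : IsIterAntideriv D F η) :
    IsDiffSubfield D (adjoinSF F (Set.range η)) := by
  refine isDiffSubfield_closure hD ?_
  rintro x (hx | ⟨i, rfl⟩)
  · exact le_adjoinSF F _ (hF x hx)
  · exact Subfield.closure_mono (Set.union_subset_union_right _ (Set.image_subset_range _ _)) (hη i)

end IterAntideriv

theorem AlgebraicIndependent.snoc {R A : Type*} [CommRing R] [CommRing A] [Algebra R A]
    {n : ℕ} {η : Fin n → A} (hη : AlgebraicIndependent R η) {z : A}
    (hz : Transcendental (Algebra.adjoin R (Set.range η)) z) :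
    AlgebraicIndependent R (Fin.snoc η z : Fin (n + 1) → A) := by
  have h := ((hη.option_iff_transcendental z).2 hz).comp _ (finSuccEquivLast (n := n)).injective
  convert h using 1
  ext j
  refine Fin.lastCases ?_ (fun k => ?_) j <;>
    simp [finSuccEquivLast_castSucc, finSuccEquivLast_last]

theorem IsIterAntideriv.exists_algebraicIndependent {E : Type*} [Field E] [CharZero E]
    {D : E → E} (hD : IsDeriv D) {F : Subfield E} (hF : IsDiffSubfield D F)
    (hconst : ∀ x, D x = 0 → x ∈ F) {n : ℕ} {ζ : Fin n → E} (hζ : IsIterAntideriv D F ζ) :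
    ∃ (t : ℕ) (η : Fin t → E), IsIterAntideriv D F η ∧ AlgebraicIndependent F η ∧
      adjoinSF F (Set.range η) = adjoinSF F (Set.range ζ) := by
  induction n with
  | zero => exact ⟨0, ζ, hζ, algebraicIndependent_empty_type, rfl⟩
  | succ n ih =>
    obtain ⟨ζ, z, rfl⟩ : ∃ ζ₀ z, ζ = Fin.snoc ζ₀ z :=
      ⟨Fin.init ζ, ζ (Fin.last n), (Fin.snoc_init_self ζ).symm⟩
    obtain ⟨hζ, hz⟩ := isIterAntideriv_snoc.1 hζ
    obtain ⟨t, η, hη, hind, hspan⟩ := ih hζ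
    rw [← hspan] at hz
    have hspan_snoc : adjoinSF F (Set.range (Fin.snoc ζ z : Fin (n + 1) → E)) =
        adjoinSF (adjoinSF F (Set.range η)) {z} := by
      rw [Fin.range_snoc, adjoinSF_insert, hspan]
    by_cases halg : IsAlgebraic (adjoinSF F (Set.range η)) z
    · have hzK := (hη.isDiffSubfield_adjoinSF hD hF).mem_of_isAlgebraic_of_deriv_mem hD
        (fun x hx => le_adjoinSF F _ (hconst x hx)) hz halg
      refine ⟨t, η, hη, hind, ?_⟩
      rw [hspan_snoc, adjoinSF_eq_self (Set.singleton_subset_iff.2 hzK)]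
    · refine ⟨t + 1, Fin.snoc η z, isIterAntideriv_snoc.2 ⟨hη, hz⟩, hind.snoc ?_, ?_⟩
      · rw [← IntermediateField.transcendental_adjoin_iff]
        rwa [adjoinSF_eq_toSubfield_adjoin] at halg
      · rw [hspan_snoc, Fin.range_snoc, adjoinSF_insert]

/-- an iterated antiderivative extension `E` of `F` (here `E` is the
ambient field, i.e. `⊤`) is purely transcendental over `F`, with a transcendence
base consisting of iterated antiderivatives of `F`. -/
theorem statement1 {E : Type*} [Field E] [CharZero E] (D : E → E) (hD : IsDeriv D)
    (F : Subfield E) (hF : IsDiffSubfield D F)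
    (hIAE : IsIAE D F ⊤) :
    ∃ (t : ℕ) (η : Fin t → E), IsIterAntideriv D F η ∧ AlgebraicIndependent F η ∧
      adjoinSF F (Set.range η) = ⊤ ∧ IsTranscendenceBasis F η := by
  obtain ⟨⟨-, hconst⟩, n, ζ, hζ, htop⟩ := hIAE
  obtain ⟨t, η, hη, hind, hspan⟩ :=
    hζ.exists_algebraicIndependent hD hF fun x => hconst x trivial
  have hspan_top : adjoinSF F (Set.range η) = ⊤ := hspan.trans htop.symm
  exact ⟨t, η, hη, hind, hspan_top, hind.isTranscendenceBasis_iff_isAlgebraic.2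
    (isAlgebraic_adjoin_of_adjoinSF_eq_top hspan_top)⟩
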